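/- arXiv:math/0612632 — 2 statements merged into one kernel-verified Lean document; each statement's English description precedes it below -/
import Mathlib

section
/- If G is a non-abelian CSA group and A, B are nontrivial normal subgroups of G, then the commutator subgroup [A, B] is nontrivial; in particular A ∩ B ≠ {e}. -/
/-!
Malnormality of a maximal abelian subgroup `M` says that `x ≠ 1`, `x ∈ M` and `g x g⁻¹ ∈ M` force
`g ∈ M`. So `M` contains the centralizer of each of its nontrivial elements, and `M = G` as soon
as `M` contains a nontrivial normal subgroup. If `⁅A, B⁆ = ⊥`, choose `1 ≠ a ∈ A` and a maximal
abelian `M ∋ a`: `B` centralizes `a`, so `B ≤ M`, hence `G = M` is abelian.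
-/

universe u

/-- A group is *CSA* if every maximal abelian subgroup `A` is malnormal:
for every `g ∉ A`, `A ⊓ gAg⁻¹ = ⊥`. -/
def IsCSA (G : Type u) [Group G] : Prop :=
  ∀ A : Subgroup G, Maximal (fun H : Subgroup G => IsMulCommutative H) A →
    ∀ g : G, g ∉ A → A ⊓ Subgroup.map (MulAut.conj g).toMonoidHom A = ⊥

namespace Subgroup

variable {G : Type*} [Group G]

theorem exists_le_maximal_isMulCommutative (H : Subgroup G) [IsMulCommutative H] :
    ∃ M : Subgroup G, H ≤ M ∧ Maximal (fun K : Subgroup G => IsMulCommutative K) M := by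
  refine zorn_le_nonempty₀ {K : Subgroup G | IsMulCommutative K}
    (fun c hc hchain K hK => ?_) H ‹_›
  have hdir : DirectedOn (· ≤ ·) c := hchain.directedOn
  refine ⟨sSup c, ⟨⟨fun ⟨x, hx⟩ ⟨y, hy⟩ => ?_⟩⟩, fun _ => le_sSup⟩
  rw [mem_sSup_of_directedOn ⟨K, hK⟩ hdir] at hx hy
  obtain ⟨Kx, hKx, hxKx⟩ := hx
  obtain ⟨Ky, hKy, hyKy⟩ := hy
  obtain ⟨L, hL, hKxL, hKyL⟩ := hdir Kx hKx Ky hKy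
  have : IsMulCommutative L := hc hL
  exact Subtype.ext (setLike_mul_comm (hKxL hxKx) (hKyL hyKy))

theorem exists_mem_maximal_isMulCommutative (a : G) :
    ∃ M : Subgroup G, a ∈ M ∧ Maximal (fun K : Subgroup G => IsMulCommutative K) M :=
  (exists_le_maximal_isMulCommutative (zpowers a)).imp fun _ h => ⟨h.1 (mem_zpowers a), h.2⟩

end Subgroup

namespace IsCSA

open Subgroup

variable {G : Type*} [Group G] {M : Subgroup G}

theorem conj_mem_imp_mem (hG : IsCSA G)
    (hM : Maximal (fun K : Subgroup G => IsMulCommutative K) M) {g x : G} (hx : x ≠ 1)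
    (hxM : x ∈ M) (hgx : g * x * g⁻¹ ∈ M) : g ∈ M := by
  by_contra hg
  have hmem : g * x * g⁻¹ ∈ M ⊓ M.map (MulAut.conj g).toMonoidHom := ⟨hgx, x, hxM, rfl⟩
  rw [hG M hM g hg, mem_bot, mul_inv_eq_one, mul_eq_left] at hmem
  exact hx hmem

theorem centralizer_le (hG : IsCSA G)
    (hM : Maximal (fun K : Subgroup G => IsMulCommutative K) M) {a : G} (ha : a ≠ 1)
    (haM : a ∈ M) : centralizer {a} ≤ M := fun g hg =>
  hG.conj_mem_imp_mem hM ha haM <| by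
    rwa [mem_centralizer_singleton_iff.mp hg, mul_inv_cancel_right]

theorem eq_top_of_normal_le (hG : IsCSA G)
    (hM : Maximal (fun K : Subgroup G => IsMulCommutative K) M) {N : Subgroup G} (hN : N.Normal)
    (hN₁ : N ≠ ⊥) (hNM : N ≤ M) : M = ⊤ := by
  obtain ⟨⟨b, hbN⟩, hb⟩ := ne_bot_iff_exists_ne_one.mp hN₁
  exact eq_top_iff' M |>.mpr fun g =>
    hG.conj_mem_imp_mem hM (by simpa using hb) (hNM hbN) (hNM (hN.conj_mem b hbN g))

theorem commutator_ne_bot (hG : IsCSA G) (hG' : ∃ a b : G, a * b ≠ b * a) {A B : Subgroup G}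
    (hA : A ≠ ⊥) (hB : B.Normal) (hB₁ : B ≠ ⊥) : ⁅A, B⁆ ≠ ⊥ := by
  intro hAB
  obtain ⟨⟨a, haA⟩, ha⟩ := ne_bot_iff_exists_ne_one.mp hA
  replace ha : a ≠ 1 := by simpa using ha
  obtain ⟨M, haM, hM⟩ := exists_mem_maximal_isMulCommutative a
  have hBM : B ≤ M := fun b hb => hG.centralizer_le hM ha haM <|
    mem_centralizer_singleton_iff.mpr (commutator_eq_bot_iff_le_centralizer.mp hAB haA b hb)
  have hMtop : M = ⊤ := hG.eq_top_of_normal_le hM hB hB₁ hBM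
  obtain ⟨x, y, hxy⟩ := hG'
  have : IsMulCommutative M := hM.prop
  exact hxy (setLike_mul_comm ((eq_top_iff' M).mp hMtop x) ((eq_top_iff' M).mp hMtop y))

end IsCSA

/-- If `A` and `B` are nontrivial normal subgroups of a non-abelian CSA group,
then the commutator subgroup `⁅A, B⁆` is nontrivial; in particular
`A ⊓ B ≠ ⊥`. -/
theorem stmt_7 (G : Type u) [Group G] (hcsa : IsCSA G)
    (hna : ∃ a b : G, a * b ≠ b * a)
    (A B : Subgroup G) (hA : A.Normal) (hB : B.Normal)
    (hAnt : A ≠ ⊥) (hBnt : B ≠ ⊥) :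
    ⁅A, B⁆ ≠ ⊥ ∧ A ⊓ B ≠ ⊥ := by
  have hAB := hcsa.commutator_ne_bot hna hAnt hB hBnt
  exact ⟨hAB, fun h => hAB (eq_bot_iff.mpr (h ▸ Subgroup.commutator_le_inf A B))⟩
end

section
/- No finite group whose order is divisible by at least two distinct primes and all of whose subgroups are indecomposable has a generalized quaternion group as Sylow 2-subgroup: if all subgroups of the finite group G are indecomposable and G is not a p-group, then the Sylow 2-subgroups of G are cyclic. -/
/-!
Every abelian subgroup is indecomposable, hence cyclic, and two commuting elements of coprime
orders cannot both be nontrivial. Consequently the product of two involutions has odd order, a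
2-subgroup contains at most one involution, the centralizer of an involution `z` is a 2-group,
and centralizers of distinct involutions meet trivially. The sets `C(t) \ {1}`, for `t`
conjugate to `z`, then fill all of `G` except for as many elements as there are conjugates of
`z`, while the products `z * t` are that many distinct elements of odd order. So the elements of
odd order are exactly these products; `z` inverts each of them and they form an abelian, hence
cyclic, normal subgroup `O`, nontrivial because `G` is not a 2-group. As `Aut O` is abelian,
every commutator in a Sylow 2-subgroup `P` centralizes `O`, hence is trivial; so `P` is abelian
and therefore cyclic.
-/

universe u

/-- A group is *indecomposable* if whenever it is isomorphic to a direct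
product `A × B` of groups, one of `A` or `B` is trivial. -/
def Indecomposable (G : Type u) [Group G] : Prop :=
  ∀ (A B : Type u) [Group A] [Group B], Nonempty (G ≃* A × B) →
    Subsingleton A ∨ Subsingleton B

open Subgroup MulAction ConjAct Finset

theorem isCyclic_of_indecomposable {H : Type} [CommGroup H] [Finite H]
    (hH : Indecomposable H) : IsCyclic H := by
  obtain ⟨ι, _, n, hn, ⟨e⟩⟩ := CommGroup.equiv_prod_multiplicative_zmod_of_finite H
  have hnt : ∀ i, Nontrivial (Multiplicative (ZMod (n i))) := fun i =>
    haveI : Fact (1 < n i) := ⟨hn i⟩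
    inferInstanceAs (Nontrivial (ZMod (n i)))
  have : Subsingleton ι := by
    refine ⟨fun i j => by_contra fun hij => ?_⟩
    classical
    let split : (∀ k, Multiplicative (ZMod (n k))) ≃*
        (∀ k : {k // k = i}, Multiplicative (ZMod (n k))) ×
          (∀ k : {k // ¬k = i}, Multiplicative (ZMod (n k))) :=
      { Equiv.piEquivPiSubtypeProd (· = i) _ with map_mul' := fun _ _ => rfl }
    rcases hH _ _ ⟨e.trans split⟩ with h | h
    · have := Pi.nontrivial_at
        (f := fun k : {k // k = i} => Multiplicative (ZMod (n k))) ⟨i, rfl⟩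
      exact not_subsingleton _ h
    · have := Pi.nontrivial_at
        (f := fun k : {k // ¬k = i} => Multiplicative (ZMod (n k))) ⟨j, Ne.symm hij⟩
      exact not_subsingleton _ h
  rcases isEmpty_or_nonempty ι with hι | ⟨⟨i⟩⟩
  · have : Subsingleton H := e.toEquiv.subsingleton
    exact isCyclic_of_subsingleton
  · have : Unique ι := uniqueOfSubsingleton i
    exact isCyclic_of_surjective (e.trans (MulEquiv.piUnique _)).symm.toMonoidHom
      (MulEquiv.surjective _)

variable {G : Type} [Group G]

theorem mul_self_eq_one_of_orderOf_eq_two {t : G} (ht : orderOf t = 2) : t * t = 1 := by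
  rw [← sq, ← ht, pow_orderOf_eq_one]

theorem eq_one_or_eq_of_mem_zpowers_of_orderOf_eq_two {t w : G} (ht : orderOf t = 2)
    (hw : w ∈ zpowers t) : w = 1 ∨ w = t := by
  obtain ⟨k, rfl⟩ := mem_zpowers_iff.mp hw
  rw [← zpow_mod_orderOf, ht]
  rcases Int.emod_two_eq_zero_or_one k with h | h <;> simp [h]

theorem IsPGroup.exists_orderOf_eq_pow_of_mem {p : ℕ} [Fact p.Prime] {K : Subgroup G}
    (hK : IsPGroup p K) {x : G} (hx : x ∈ K) : ∃ k, orderOf x = p ^ k := by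
  obtain ⟨k, hk⟩ := IsPGroup.iff_orderOf.mp hK ⟨x, hx⟩
  exact ⟨k, by rwa [orderOf_mk] at hk⟩

theorem IsPGroup.exists_orderOf_eq_of_ne_bot [Finite G] {p : ℕ} [Fact p.Prime] {K : Subgroup G}
    (hK : IsPGroup p K) (hne : K ≠ ⊥) : ∃ w ∈ K, orderOf w = p := by
  rcases hK.card_eq_or_dvd with h | h
  · exact absurd (card_eq_one.mp h) hne
  · obtain ⟨w, hw⟩ := exists_prime_orderOf_dvd_card' p h
    exact ⟨w, w.2, by rwa [orderOf_coe]⟩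

theorem IsPGroup.eq_one_of_mem_of_coprime {p : ℕ} [Fact p.Prime] {K : Subgroup G}
    (hK : IsPGroup p K) {x : G} (hx : x ∈ K) (hcop : p.Coprime (orderOf x)) : x = 1 := by
  obtain ⟨k, hk⟩ := hK.exists_orderOf_eq_pow_of_mem hx
  have := hcop.pow_left k
  rwa [← hk, Nat.coprime_self, orderOf_eq_one_iff] at this

theorem card_centralizer_mul_ncard_orbit (g : G) :
    Nat.card (centralizer {g}) * (orbit (ConjAct G) g).ncard = Nat.card G := by
  rw [nat_card_centralizer_nat_card_stabilizer, ← MulAction.index_stabilizer, card_mul_index]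
  rfl

theorem commute_of_conj_eq_inv {H : Subgroup G} {z : G}
    (hz : ∀ u ∈ H, z * u * z⁻¹ = u⁻¹) : ∀ u ∈ H, ∀ v ∈ H, Commute u v := by
  intro u hu v hv
  have h := hz _ (mul_mem hu hv)
  rw [show z * (u * v) * z⁻¹ = z * u * z⁻¹ * (z * v * z⁻¹) by group, hz u hu, hz v hv,
    mul_inv_rev] at h
  exact Commute.inv_inv_iff.mp h

open scoped commutatorElement

theorem commute_commutatorElement_of_mem (N : Subgroup G) [N.Normal] [IsCyclic N] (x y : G)
    {u : G} (hu : u ∈ N) : Commute ⁅x, y⁆ u := by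
  have h : MulAut.conjNormal (H := N) ⁅x, y⁆ = 1 := by
    rw [map_commutatorElement, commutatorElement_eq_one_iff_commute]
    exact (IsCyclic.mulAutMulEquiv N).injective (by rw [map_mul, map_mul, mul_comm])
  have := congrArg (fun f => ((f ⟨u, hu⟩ : N) : G)) h
  simp only [MulAut.conjNormal_apply, MulAut.one_apply] at this
  rw [commute_iff_eq, ← mul_inv_eq_iff_eq_mul, this]

theorem eq_bot_or_eq_bot_of_commute_of_disjoint (hind : ∀ H : Subgroup G, Indecomposable H)
    {H K : Subgroup G} (hcomm : ∀ x ∈ H, ∀ y ∈ K, Commute x y) (hdisj : Disjoint H K) :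
    H = ⊥ ∨ K = ⊥ := by
  have hf := (MonoidHom.noncommCoprod_injective H.subtype K.subtype
    fun x y => hcomm x x.2 y y.2).mpr
      ⟨H.subtype_injective, K.subtype_injective, by simpa only [range_subtype] using hdisj⟩
  rcases hind _ _ _ ⟨(MonoidHom.ofInjective hf).symm⟩ with h | h
  exacts [.inl (eq_bot_of_subsingleton H), .inr (eq_bot_of_subsingleton K)]

theorem eq_one_or_eq_one_of_commute_of_coprime (hind : ∀ H : Subgroup G, Indecomposable H)
    [Finite G] {a b : G} (hab : Commute a b) (hcop : (orderOf a).Coprime (orderOf b)) :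
    a = 1 ∨ b = 1 := by
  have hdisj : Disjoint (zpowers a) (zpowers b) :=
    disjoint_of_coprime_natCard (by rwa [Nat.card_zpowers, Nat.card_zpowers])
  refine (eq_bot_or_eq_bot_of_commute_of_disjoint hind ?_ hdisj).imp
    zpowers_eq_bot.mp zpowers_eq_bot.mp
  rintro _ ⟨i, rfl⟩ _ ⟨j, rfl⟩
  exact hab.zpow_zpow i j

theorem isCyclic_of_commute (hind : ∀ H : Subgroup G, Indecomposable H) [Finite G]
    {H : Subgroup G} (hcomm : ∀ x ∈ H, ∀ y ∈ H, Commute x y) : IsCyclic H :=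
  letI : CommGroup H := { H.toGroup with mul_comm := fun x y => Subtype.ext (hcomm x x.2 y y.2) }
  isCyclic_of_indecomposable (hind H)

theorem eq_of_commute_of_orderOf_eq_two (hind : ∀ H : Subgroup G, Indecomposable H)
    {t t' : G} (ht : orderOf t = 2) (ht' : orderOf t' = 2) (hcomm : Commute t t') :
    t = t' := by
  by_contra hne
  have hdisj : Disjoint (zpowers t) (zpowers t') := by
    refine disjoint_def.mpr fun {w} hw hw' => ?_
    rcases eq_one_or_eq_of_mem_zpowers_of_orderOf_eq_two ht hw with h | rfl
    · exact h
    · exact (eq_one_or_eq_of_mem_zpowers_of_orderOf_eq_two ht' hw').resolve_right hne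
  have hcomm' : ∀ x ∈ zpowers t, ∀ y ∈ zpowers t', Commute x y := by
    rintro _ ⟨i, rfl⟩ _ ⟨j, rfl⟩
    exact hcomm.zpow_zpow i j
  rcases eq_bot_or_eq_bot_of_commute_of_disjoint hind hcomm' hdisj with h | h
  · exact absurd (orderOf_eq_one_iff.mpr (zpowers_eq_bot.mp h)) (by omega)
  · exact absurd (orderOf_eq_one_iff.mpr (zpowers_eq_bot.mp h)) (by omega)

theorem odd_orderOf_mul_of_orderOf_eq_two (hind : ∀ H : Subgroup G, Indecomposable H)
    [Finite G] {t t' : G} (ht : orderOf t = 2) (ht' : orderOf t' = 2) :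
    Odd (orderOf (t * t')) := by
  set c := t * t' with hc
  by_contra hodd
  obtain ⟨k, hk⟩ := Nat.not_odd_iff_even.mp hodd
  have hk0 : k ≠ 0 := by rintro rfl; exact (orderOf_pos c).ne' hk
  have hw : orderOf (c ^ k) = 2 := by
    rw [orderOf_pow_of_dvd hk0 ⟨2, by omega⟩, hk, ← two_mul,
      Nat.mul_div_cancel _ (Nat.pos_of_ne_zero hk0)]
  -- `t` inverts `c`, so the involution `c ^ k` commutes with `t` and must be `t`;
  -- then `t' = t * c` commutes with `t` as well.
  have hconj : t * c * t⁻¹ = c⁻¹ := by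
    rw [hc, mul_inv_rev, inv_eq_self_of_orderOf_eq_two ht, inv_eq_self_of_orderOf_eq_two ht',
      ← mul_assoc, mul_self_eq_one_of_orderOf_eq_two ht, one_mul]
  have hwt : c ^ k = t := by
    refine (eq_of_commute_of_orderOf_eq_two hind ht hw ?_).symm
    rw [commute_iff_eq, ← mul_inv_eq_iff_eq_mul, ← conj_pow, hconj, inv_pow,
      inv_eq_self_of_orderOf_eq_two hw]
  have htc : Commute t c := hwt ▸ Commute.pow_left (Commute.refl c) k
  have htt' : t = t' := by
    refine eq_of_commute_of_orderOf_eq_two hind ht ht' ?_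
    have : t' = t * c := by rw [hc, ← mul_assoc, mul_self_eq_one_of_orderOf_eq_two ht, one_mul]
    exact this ▸ (Commute.refl t).mul_right htc
  rw [hc, ← htt', mul_self_eq_one_of_orderOf_eq_two ht, orderOf_one] at hodd
  exact hodd odd_one

theorem exists_orderOf_eq_pow_or_coprime (hind : ∀ H : Subgroup G, Indecomposable H) [Finite G]
    {p : ℕ} (hp : p.Prime) (x : G) : (∃ k, orderOf x = p ^ k) ∨ p.Coprime (orderOf x) := by
  set n := orderOf x
  have hn : n ≠ 0 := (orderOf_pos x).ne'
  set a := p ^ n.factorization p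
  have ha : a ≠ 0 := pow_ne_zero _ hp.ne_zero
  have hb : n / a ≠ 0 := (Nat.ordCompl_pos p hn).ne'
  have hxa : orderOf (x ^ a) = n / a := orderOf_pow_of_dvd ha (Nat.ordProj_dvd n p)
  have hxb : orderOf (x ^ (n / a)) = a := by
    rw [orderOf_pow_of_dvd hb (Nat.ordCompl_dvd n p), Nat.div_div_self (Nat.ordProj_dvd n p) hn]
  have hcop : (orderOf (x ^ a)).Coprime (orderOf (x ^ (n / a))) := by
    rw [hxa, hxb]
    exact ((Nat.coprime_ordCompl hp hn).pow_left _).symm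
  rcases eq_one_or_eq_one_of_commute_of_coprime hind ((Commute.refl x).pow_pow _ _) hcop with
    h | h
  · rw [h, orderOf_one] at hxa
    refine .inl ⟨n.factorization p, ?_⟩
    calc n = a * (n / a) := (Nat.ordProj_mul_ordCompl_eq_self n p).symm
      _ = a := by rw [← hxa, mul_one]
  · rw [h, orderOf_one] at hxb
    refine .inr ((hp.coprime_iff_not_dvd).mpr fun hdvd => ?_)
    have : p ^ 1 ≤ a := Nat.pow_le_pow_right hp.pos ((hp.dvd_iff_one_le_factorization hn).mp hdvd)
    rw [pow_one, ← hxb] at this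
    exact hp.one_lt.not_ge this

theorem eq_of_orderOf_eq_two_of_mem (hind : ∀ H : Subgroup G, Indecomposable H) [Finite G]
    {K : Subgroup G} (hK : IsPGroup 2 K) {t t' : G} (ht : t ∈ K) (ht' : t' ∈ K)
    (h2 : orderOf t = 2) (h2' : orderOf t' = 2) : t = t' := by
  have h := hK.eq_one_of_mem_of_coprime (mul_mem ht ht')
    (Nat.coprime_two_left.mpr (odd_orderOf_mul_of_orderOf_eq_two hind h2 h2'))
  rwa [← inv_eq_iff_mul_eq_one, inv_eq_self_of_orderOf_eq_two h2] at h

theorem isPGroup_centralizer_of_orderOf_eq_two (hind : ∀ H : Subgroup G, Indecomposable H)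
    [Finite G] {t : G} (ht : orderOf t = 2) : IsPGroup 2 (centralizer {t}) := by
  refine IsPGroup.iff_orderOf.mpr fun u => ?_
  rw [← orderOf_coe]
  rcases exists_orderOf_eq_pow_or_coprime hind Nat.prime_two u with h | hodd
  · exact h
  have hcomm : Commute (u : G) t := mem_centralizer_singleton_iff.mp u.2
  rcases eq_one_or_eq_one_of_commute_of_coprime hind hcomm (by rwa [ht, Nat.coprime_comm]) with
    h | h
  · exact ⟨0, by rw [h, orderOf_one, pow_zero]⟩
  · exact absurd (h ▸ ht) (by simp)

theorem disjoint_centralizer_of_orderOf_eq_two (hind : ∀ H : Subgroup G, Indecomposable H)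
    [Finite G] {t t' : G} (ht : orderOf t = 2) (ht' : orderOf t' = 2) (hne : t ≠ t') :
    Disjoint (centralizer {t}) (centralizer {t'}) := by
  have hK : IsPGroup 2 ↥(centralizer {t} ⊓ centralizer {t'}) :=
    (isPGroup_centralizer_of_orderOf_eq_two hind ht).to_le inf_le_left
  rw [disjoint_iff]
  by_contra hbot
  obtain ⟨w, hw, hw2⟩ := hK.exists_orderOf_eq_of_ne_bot hbot
  have hwt := eq_of_orderOf_eq_two_of_mem hind (isPGroup_centralizer_of_orderOf_eq_two hind ht)
    hw.1 (mem_centralizer_singleton_iff.mpr rfl) hw2 ht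
  have hwt' := eq_of_orderOf_eq_two_of_mem hind (isPGroup_centralizer_of_orderOf_eq_two hind ht')
    hw.2 (mem_centralizer_singleton_iff.mpr rfl) hw2 ht'
  exact hne (hwt.symm.trans hwt')

theorem ncard_odd_orderOf_le_ncard_orbit (hind : ∀ H : Subgroup G, Indecomposable H)
    [Finite G] {z : G} (hz : orderOf z = 2) :
    {u : G | Odd (orderOf u)}.ncard ≤ (orbit (ConjAct G) z).ncard := by
  classical
  have := Fintype.ofFinite G
  set T := (orbit (ConjAct G) z).toFinset
  set c := Nat.card (centralizer {z})
  have horder : ∀ t ∈ T, orderOf t = 2 := fun t ht => by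
    obtain ⟨g, hg⟩ := mem_orbit_conjAct.mp (Set.mem_toFinset.mp ht)
    rw [← hz, hg.orderOf_eq]
  have hcard : ∀ t ∈ T, Nat.card (centralizer {t}) = c := fun t ht => by
    have h := card_centralizer_mul_ncard_orbit t
    rw [MulAction.orbit_eq_iff.mpr (Set.mem_toFinset.mp ht), ← card_centralizer_mul_ncard_orbit z]
      at h
    exact Nat.eq_of_mul_eq_mul_right ((Set.ncard_pos (Set.toFinite _)).mpr (nonempty_orbit z)) h
  let E : G → Finset G := fun t => (univ.filter (· ∈ centralizer {t})).erase 1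
  have hE : ∀ t ∈ T, #(E t) + 1 = c := fun t ht => by
    rw [card_erase_add_one (by simp [one_mem]), ← hcard t ht, ← Fintype.card_subtype,
      Nat.card_eq_fintype_card]
  have hEdisj : (T : Set G).PairwiseDisjoint E := fun t ht t' ht' hne => by
    show Disjoint (E t) (E t')
    refine Finset.disjoint_left.mpr fun x hx hx' => ?_
    simp only [E, mem_erase, mem_filter, mem_univ, true_and] at hx hx'
    exact hx.1 (disjoint_def.mp (disjoint_centralizer_of_orderOf_eq_two hind (horder t ht)
      (horder t' ht') hne) hx.2 hx'.2)
  have hEodd : Disjoint (T.biUnion E) (univ.filter fun u : G => Odd (orderOf u)) := by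
    refine Finset.disjoint_left.mpr fun x hx hodd => ?_
    obtain ⟨t, ht, hxt⟩ := mem_biUnion.mp hx
    simp only [E, mem_erase, mem_filter, mem_univ, true_and] at hxt hodd
    have hC := isPGroup_centralizer_of_orderOf_eq_two hind (horder t ht)
    exact hxt.1 (hC.eq_one_of_mem_of_coprime hxt.2 (Nat.coprime_two_left.mpr hodd))
  have hsum : ∑ t ∈ T, #(E t) + #T = #T * c := by
    have h := sum_congr rfl hE
    rwa [sum_add_distrib, sum_const, sum_const, smul_eq_mul, smul_eq_mul, mul_one] at h
  have hT : (T : Set G) = orbit (ConjAct G) z := Set.coe_toFinset _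
  have hG : Fintype.card G = #T * c := by
    rw [← Nat.card_eq_fintype_card, ← card_centralizer_mul_ncard_orbit z, mul_comm, ← hT,
      Set.ncard_coe_finset]
  have hle := (card_union_of_disjoint hEodd).symm.trans_le (card_le_univ _)
  rw [card_biUnion hEdisj, hG] at hle
  have hOdd : {u : G | Odd (orderOf u)} = ↑(univ.filter fun u : G => Odd (orderOf u)) := by simp
  rw [hOdd, ← hT, Set.ncard_coe_finset, Set.ncard_coe_finset]
  omega

theorem exists_isConj_mul_eq_of_odd_orderOf (hind : ∀ H : Subgroup G, Indecomposable H)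
    [Finite G] {z u : G} (hz : orderOf z = 2) (hu : Odd (orderOf u)) :
    ∃ t, IsConj t z ∧ z * t = u := by
  have hsub : (z * ·) '' orbit (ConjAct G) z ⊆ {u | Odd (orderOf u)} := by
    rintro _ ⟨t, ht, rfl⟩
    obtain ⟨g, hg⟩ := mem_orbit_conjAct.mp ht
    exact odd_orderOf_mul_of_orderOf_eq_two hind hz (hg.orderOf_eq.trans hz)
  have heq := Set.eq_of_subset_of_ncard_le hsub <| by
    rw [Set.ncard_image_of_injective _ (mul_right_injective z)]
    exact ncard_odd_orderOf_le_ncard_orbit hind hz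
  obtain ⟨t, ht, rfl⟩ : u ∈ (z * ·) '' orbit (ConjAct G) z := heq ▸ hu
  exact ⟨t, mem_orbit_conjAct.mp ht, rfl⟩

theorem conj_eq_inv_of_odd_orderOf (hind : ∀ H : Subgroup G, Indecomposable H) [Finite G]
    {z u : G} (hz : orderOf z = 2) (hu : Odd (orderOf u)) : z * u * z⁻¹ = u⁻¹ := by
  obtain ⟨t, ⟨g, hg⟩, rfl⟩ := exists_isConj_mul_eq_of_odd_orderOf hind hz hu
  rw [mul_inv_rev, inv_eq_self_of_orderOf_eq_two (hg.orderOf_eq.trans hz),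
    inv_eq_self_of_orderOf_eq_two hz, ← mul_assoc, mul_self_eq_one_of_orderOf_eq_two hz, one_mul]

theorem odd_orderOf_mul_of_odd_orderOf (hind : ∀ H : Subgroup G, Indecomposable H) [Finite G]
    {z u v : G} (hz : orderOf z = 2) (hu : Odd (orderOf u)) (hv : Odd (orderOf v)) :
    Odd (orderOf (u * v)) := by
  have hzinv := inv_eq_self_of_orderOf_eq_two hz
  have hne : ∀ w : G, Odd (orderOf w) → w ≠ z := fun w hw h => by
    rw [h, hz] at hw; exact Nat.not_odd_iff_even.mpr even_two hw
  have huz : orderOf (u * z) = 2 := by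
    refine orderOf_eq_prime ?_ fun h => hne u hu (by rwa [mul_eq_one_iff_eq_inv, hzinv] at h)
    have := conj_eq_inv_of_odd_orderOf hind hz hu
    rw [hzinv] at this
    rw [sq, mul_assoc, ← mul_assoc z, this, mul_inv_cancel]
  have hzv : orderOf (z * v) = 2 := by
    refine orderOf_eq_prime ?_ fun h => hne v hv (by rwa [mul_eq_one_iff_eq_inv', hzinv] at h)
    have := conj_eq_inv_of_odd_orderOf hind hz hv
    rw [hzinv] at this
    rw [sq, ← mul_assoc, this, inv_mul_cancel]
  have : u * v = u * z * (z * v) := by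
    rw [mul_assoc, ← mul_assoc z, mul_self_eq_one_of_orderOf_eq_two hz, one_mul]
  exact this ▸ odd_orderOf_mul_of_orderOf_eq_two hind huz hzv

variable (G) in
def oddOrderSubgroup
    (hmul : ∀ u v : G, Odd (orderOf u) → Odd (orderOf v) → Odd (orderOf (u * v))) :
    Subgroup G where
  carrier := {u | Odd (orderOf u)}
  mul_mem' := hmul _ _
  one_mem' := by simp
  inv_mem' := by simp

instance oddOrderSubgroup_normal
    (hmul : ∀ u v : G, Odd (orderOf u) → Odd (orderOf v) → Odd (orderOf (u * v))) :
    (oddOrderSubgroup G hmul).Normal :=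
  ⟨fun u hu g => by
    show Odd (orderOf (g * u * g⁻¹))
    rwa [← (show SemiconjBy g u (g * u * g⁻¹) by simp [SemiconjBy]).orderOf_eq]⟩

theorem exists_ne_one_odd_orderOf (hind : ∀ H : Subgroup G, Indecomposable H) [Finite G]
    (hG : ¬IsPGroup 2 G) : ∃ u : G, u ≠ 1 ∧ Odd (orderOf u) := by
  obtain ⟨u, hu⟩ := not_forall.mp (mt IsPGroup.iff_orderOf.mpr hG)
  refine ⟨u, fun h => hu ⟨0, by rw [h, orderOf_one, pow_zero]⟩, ?_⟩
  exact Nat.coprime_two_left.mp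
    ((exists_orderOf_eq_pow_or_coprime hind Nat.prime_two u).resolve_left hu)

/-- If all subgroups of the finite group `G` are indecomposable and `G` is
not a `p`-group, then the Sylow `2`-subgroups of `G` are cyclic (in
particular, not generalized quaternion). -/
theorem stmt_17 (G : Type) [Group G] [Fintype G]
    (hind : ∀ H : Subgroup G, Indecomposable H)
    (hnp : ¬ ∃ p : ℕ, p.Prime ∧ IsPGroup p G)
    (P : Sylow 2 G) : IsCyclic (P : Subgroup G) := by
  obtain ⟨u, hu1, hu⟩ := exists_ne_one_odd_orderOf hind fun h => hnp ⟨2, Nat.prime_two, h⟩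
  rcases P.isPGroup'.card_eq_or_dvd with hP | hP
  · exact @isCyclic_of_subsingleton _ _ (Nat.card_eq_one_iff_unique.mp hP).1
  obtain ⟨z, hz⟩ := exists_prime_orderOf_dvd_card' 2 (hP.trans (card_subgroup_dvd_card _))
  have hmul := fun u v => odd_orderOf_mul_of_odd_orderOf (u := u) (v := v) hind hz
  have : IsCyclic (oddOrderSubgroup G hmul) := isCyclic_of_commute hind <|
    commute_of_conj_eq_inv fun _ hv => conj_eq_inv_of_odd_orderOf hind hz hv
  refine isCyclic_of_commute hind fun x hx y hy => ?_
  have hcop : (orderOf ⁅x, y⁆).Coprime (orderOf u) := by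
    have hmem : ⁅x, y⁆ ∈ (P : Subgroup G) := by
      rw [commutatorElement_def]
      exact mul_mem (mul_mem (mul_mem hx hy) (inv_mem hx)) (inv_mem hy)
    obtain ⟨k, hk⟩ := P.isPGroup'.exists_orderOf_eq_pow_of_mem hmem
    exact hk ▸ (Nat.coprime_two_left.mpr hu).pow_left k
  rcases eq_one_or_eq_one_of_commute_of_coprime hind
    (commute_commutatorElement_of_mem (oddOrderSubgroup G hmul) x y hu) hcop with h | h
  · exact commutatorElement_eq_one_iff_commute.mp h
  · exact absurd h hu1
end
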